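/- arXiv:2005.05453 — 4 statements merged into one kernel-verified Lean document; each statement's English description precedes it below -/
import Mathlib

section
/- For every α ∈ [−η, 1] there exists c' > 0 such that ⟨k⟩_ε ≥ c'·ε^{(1−α)/2}·⟨k⟩^{(3−α)/2} for all ε ∈ (0,1] and all k ∈ ℤ³. -/
open Real

/-- Euclidean norm of a point of `ℤ³`. -/
noncomputable def znorm (k : Fin 3 → ℤ) : ℝ :=
  Real.sqrt (∑ i, ((k i : ℝ)) ^ 2)

/-- The quantity `⟨k⟩_ε = √(1 + ε⁻²·Q(2πε|k|))`. -/
noncomputable def brk (Q : ℝ → ℝ) (ε : ℝ) (k : Fin 3 → ℤ) : ℝ :=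
  Real.sqrt (1 + (ε ^ 2)⁻¹ * Q (2 * π * ε * znorm k))

/-- The quantity `⟨k⟩ = √(1 + 4π²|k|²)`. -/
noncomputable def jnorm (k : Fin 3 → ℤ) : ℝ :=
  Real.sqrt (1 + 4 * π ^ 2 * znorm k ^ 2)

lemma znorm_nonneg (k : Fin 3 → ℤ) : 0 ≤ znorm k := Real.sqrt_nonneg _

lemma znorm_cases (k : Fin 3 → ℤ) : znorm k = 0 ∨ 1 ≤ znorm k := by
  by_cases h : ∀ i, k i = 0
  · left; simp [znorm, h]
  · right
    push_neg at h; obtain ⟨i, hi⟩ := h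
    have h1 : (1:ℝ) ≤ (k i : ℝ)^2 := by
      have h2 : (1:ℤ) ≤ (k i)^2 := by
        rcases lt_or_gt_of_ne hi with h | h <;> nlinarith
      exact_mod_cast h2
    have hsum : (1:ℝ) ≤ ∑ j, ((k j:ℝ))^2 :=
      le_trans h1 (Finset.single_le_sum (f := fun j => ((k j:ℝ))^2)
        (fun j _ => sq_nonneg _) (Finset.mem_univ i))
    exact Real.one_le_sqrt.mpr hsum

lemma quad_lower (Q : ℝ → ℝ) (hQcont : ContinuousOn Q (Set.Ici 0))
    (hpos : ∀ z : ℝ, 0 < z → 0 < Q z)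
    (C : ℝ) (hC : 0 < C) (hCb : ∀ z ∈ Set.Icc (0:ℝ) 1, |Q z - z ^ 2| ≤ C * z ^ 4) :
    ∃ m : ℝ, 0 < m ∧ ∀ w ∈ Set.Icc (0:ℝ) 1, m * w ^ 2 ≤ Q w := by
  set δ : ℝ := min 1 (2*C)⁻¹ with hδdef
  have hδpos : 0 < δ := lt_min one_pos (by positivity)
  have hδ1 : δ ≤ 1 := min_le_left _ _
  have hcomp : IsCompact (Set.Icc δ 1) := isCompact_Icc
  obtain ⟨w₀, hw₀mem, hmin'⟩ := hcomp.exists_isMinOn ⟨δ, le_refl δ, hδ1⟩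
    (hQcont.mono (fun x hx => le_trans hδpos.le hx.1))
  have hmin : ∀ w ∈ Set.Icc δ 1, Q w₀ ≤ Q w := fun w hw => hmin' hw
  have hm₀ : 0 < Q w₀ := hpos _ (lt_of_lt_of_le hδpos hw₀mem.1)
  refine ⟨min (1/2) (Q w₀), lt_min (by norm_num) hm₀, ?_⟩
  rintro w ⟨hw0, hw1⟩
  by_cases hwδ : w ≤ δ
  · have hb := hCb w ⟨hw0, hw1⟩
    have h4 : C * w ^ 4 ≤ w^2 / 2 := by
      have hw2 : w^2 ≤ (2*C)⁻¹ := by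
        calc w^2 ≤ δ^2 := by nlinarith
        _ ≤ δ := by nlinarith
        _ ≤ (2*C)⁻¹ := min_le_right _ _
      have : C * w^2 ≤ 1/2 := by
        rw [inv_eq_one_div, le_div_iff₀ (by positivity)] at hw2
        nlinarith
      nlinarith [sq_nonneg w]
    have habs := abs_le.mp hb
    have hmin2 : min (1/2) (Q w₀) ≤ 1/2 := min_le_left _ _
    nlinarith [sq_nonneg w, mul_le_mul_of_nonneg_right hmin2 (sq_nonneg w)]
  · push_neg at hwδ
    have hQw := hmin w ⟨hwδ.le, hw1⟩
    have : min (1/2) (Q w₀) * w^2 ≤ Q w₀ * 1 := by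
      have h1 : min (1/2) (Q w₀) ≤ Q w₀ := min_le_right _ _
      have h2 : w^2 ≤ 1 := by nlinarith
      have h3 : 0 ≤ min (1/2) (Q w₀) := le_min (by norm_num) hm₀.le
      nlinarith
    linarith


/-- for every `α ∈ [−η, 1]` there exists `c' > 0` such that
`⟨k⟩_ε ≥ c'·ε^((1−α)/2)·⟨k⟩^((3−α)/2)` for all `ε ∈ (0,1]` and `k ∈ ℤ³`. -/
theorem stmt_2 (Q : ℝ → ℝ) (c η : ℝ) (hc : 0 < c) (hη : 0 < η)
    (hQcont : ContinuousOn Q (Set.Ici 0))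
    (hQ0 : Q 0 = 0)
    (hquad : ∀ Λ : ℝ, 0 < Λ → ∃ C : ℝ, 0 < C ∧ ∀ z ∈ Set.Icc (0:ℝ) Λ, |Q z - z ^ 2| ≤ C * z ^ 4)
    (hpos : ∀ z : ℝ, 0 < z → 0 < Q z)
    (hgrowth : ∀ z : ℝ, 1 ≤ z → c * z ^ (3 + η) ≤ Q z) :
    ∀ α ∈ Set.Icc (-η) 1, ∃ c' : ℝ, 0 < c' ∧
      ∀ ε ∈ Set.Ioc (0:ℝ) 1, ∀ k : Fin 3 → ℤ,
        c' * ε ^ ((1 - α) / 2) * jnorm k ^ ((3 - α) / 2) ≤ brk Q ε k := by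
  rintro α ⟨hα1, hα2⟩
  have hπ : (0:ℝ) < π := Real.pi_pos
  have h2π : (0:ℝ) < 2 * π := by linarith
  obtain ⟨C, hC, hCb⟩ := hquad 1 one_pos
  obtain ⟨m, hm, hmQ⟩ := quad_lower Q hQcont hpos C hC hCb
  set B : ℝ := 1 + 4 * π ^ 2 with hBdef
  have hB1 : 1 < B := by
    have h4 : 0 < 4 * π ^ 2 := by positivity
    rw [hBdef]; linarith
  have hB0 : 0 < B := by linarith
  have hr0 : 0 < 4 * π ^ 2 / B := by positivity
  have hr1 : 4 * π ^ 2 / B ≤ 1 := by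
    rw [div_le_one hB0]; linarith
  have hi0 : 0 < B⁻¹ := by positivity
  have hi1 : B⁻¹ ≤ 1 := by
    rw [inv_le_one_iff₀]; right; linarith
  have hea : 0 ≤ 1 - α := by linarith
  have heb : 0 ≤ η + α := by linarith
  have hp2nn : 0 ≤ (3 - α) / 2 := by linarith
  have hp2le : (3 - α) / 2 ≤ (3 + η) / 2 := by linarith
  set K1 : ℝ := c * (4 * π ^ 2 / B) ^ ((3 + η) / 2) with hK1def
  set K2 : ℝ := 4 * π ^ 2 * m * B⁻¹ ^ ((3 + η) / 2) with hK2def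
  have hK1 : 0 < K1 := by
    have := Real.rpow_pos_of_pos hr0 ((3 + η) / 2); positivity
  have hK2 : 0 < K2 := by
    have := Real.rpow_pos_of_pos hi0 ((3 + η) / 2); positivity
  set q : ℝ := min (min 1 K1) K2 with hqdef
  have hq0 : 0 < q := lt_min (lt_min one_pos hK1) hK2
  have hq1 : q ≤ 1 := le_trans (min_le_left _ _) (min_le_left _ _)
  have hqK1 : q ≤ K1 := le_trans (min_le_left _ _) (min_le_right _ _)
  have hqK2 : q ≤ K2 := min_le_right _ _
  refine ⟨Real.sqrt q, Real.sqrt_pos.mpr hq0, ?_⟩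
  rintro ε ⟨hε0, hε1⟩ k
  set n : ℝ := znorm k with hndef
  have hn0 : 0 ≤ n := znorm_nonneg k
  set z : ℝ := 2 * π * ε * n with hzdef
  have hz0 : 0 ≤ z := by positivity
  have hQz : 0 ≤ Q z := by
    rcases eq_or_lt_of_le hz0 with h | h
    · rw [← h, hQ0]
    · exact (hpos z h).le
  have hRnn : (0:ℝ) ≤ 1 + (ε ^ 2)⁻¹ * Q z := by positivity
  set J : ℝ := 1 + 4 * π ^ 2 * n ^ 2 with hJdef
  have hJ0 : 0 < J := by positivity
  have hjn : jnorm k = Real.sqrt J := rfl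
  have hLnn : 0 ≤ Real.sqrt q * ε ^ ((1 - α) / 2) * jnorm k ^ ((3 - α) / 2) := by
    have h1 : 0 ≤ ε ^ ((1 - α) / 2) := Real.rpow_nonneg hε0.le _
    have h2 : 0 ≤ jnorm k ^ ((3 - α) / 2) := Real.rpow_nonneg (Real.sqrt_nonneg _) _
    positivity
  rw [brk, ← hndef, ← hzdef]
  rw [Real.le_sqrt hLnn hRnn]
  have e1 : (ε ^ ((1 - α) / 2)) ^ 2 = ε ^ (1 - α) := by
    rw [sq, ← Real.rpow_add hε0]; congr 1; ring
  have e2 : (jnorm k ^ ((3 - α) / 2)) ^ 2 = J ^ ((3 - α) / 2) := by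
    rw [hjn, sq, ← Real.rpow_add (Real.sqrt_pos.mpr hJ0), Real.sqrt_eq_rpow,
      ← Real.rpow_mul hJ0.le]
    congr 1; ring
  have elhs : (Real.sqrt q * ε ^ ((1 - α) / 2) * jnorm k ^ ((3 - α) / 2)) ^ 2
      = q * ε ^ (1 - α) * J ^ ((3 - α) / 2) := by
    rw [mul_pow, mul_pow, Real.sq_sqrt hq0.le, e1, e2]
  rw [elhs]
  have hεa1 : ε ^ (1 - α) ≤ 1 := Real.rpow_le_one hε0.le hε1 hea
  rcases znorm_cases k with hn | hn1
  · -- n = 0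
    rw [← hndef] at hn
    have hz' : z = 0 := by rw [hzdef, hn]; ring
    have hJ1 : J = 1 := by rw [hJdef, hn]; ring
    rw [hz', hQ0, hJ1, Real.one_rpow, mul_zero, mul_one, add_zero]
    calc q * ε ^ (1 - α) ≤ 1 * 1 :=
          mul_le_mul hq1 hεa1 (Real.rpow_nonneg hε0.le _) zero_le_one
      _ = 1 := by ring
  · rw [← hndef] at hn1
    have hnpos : 0 < n := lt_of_lt_of_le one_pos hn1
    have hJle : J ≤ B * n ^ 2 := by
      have h1 : (1:ℝ) ≤ n ^ 2 := by
        have := mul_le_mul hn1 hn1 zero_le_one hn0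
        calc (1:ℝ) = 1 * 1 := by ring
          _ ≤ n * n := this
          _ = n ^ 2 := by ring
      have h2 : B * n ^ 2 = n ^ 2 + 4 * π ^ 2 * n ^ 2 := by rw [hBdef]; ring
      have h3 : J = 1 + 4 * π ^ 2 * n ^ 2 := hJdef
      linarith
    have hJp : J ^ ((3 - α) / 2) ≤ B ^ ((3 - α) / 2) * n ^ (3 - α) := by
      calc J ^ ((3 - α) / 2) ≤ (B * n ^ 2) ^ ((3 - α) / 2) :=
            Real.rpow_le_rpow hJ0.le hJle hp2nn
        _ = B ^ ((3 - α) / 2) * (n ^ 2) ^ ((3 - α) / 2) :=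
            Real.mul_rpow hB0.le (sq_nonneg n)
        _ = B ^ ((3 - α) / 2) * n ^ (3 - α) := by
            rw [← Real.rpow_natCast n 2, ← Real.rpow_mul hn0]
            rw [show ((2:ℕ):ℝ) * ((3 - α) / 2) = 3 - α by push_cast; ring]
    have step1 : q * ε ^ (1 - α) * J ^ ((3 - α) / 2)
        ≤ (q * B ^ ((3 - α) / 2)) * (ε ^ (1 - α) * n ^ (3 - α)) := by
      have h1 : 0 ≤ q * ε ^ (1 - α) := by positivity
      calc q * ε ^ (1 - α) * J ^ ((3 - α) / 2)
          ≤ q * ε ^ (1 - α) * (B ^ ((3 - α) / 2) * n ^ (3 - α)) :=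
            mul_le_mul_of_nonneg_left hJp h1
        _ = (q * B ^ ((3 - α) / 2)) * (ε ^ (1 - α) * n ^ (3 - α)) := by ring
    by_cases hz1 : 1 ≤ z
    · -- growth regime
      have step2 : q * B ^ ((3 - α) / 2) ≤ c * (2 * π) ^ (3 - α) := by
        have hK1le : K1 ≤ c * (4 * π ^ 2 / B) ^ ((3 - α) / 2) := by
          apply mul_le_mul_of_nonneg_left _ hc.le
          exact Real.rpow_le_rpow_of_exponent_ge hr0 hr1 hp2le
        have hBp : 0 ≤ B ^ ((3 - α) / 2) := (Real.rpow_pos_of_pos hB0 _).le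
        calc q * B ^ ((3 - α) / 2) ≤ K1 * B ^ ((3 - α) / 2) :=
              mul_le_mul_of_nonneg_right hqK1 hBp
          _ ≤ c * (4 * π ^ 2 / B) ^ ((3 - α) / 2) * B ^ ((3 - α) / 2) :=
              mul_le_mul_of_nonneg_right hK1le hBp
          _ = c * ((4 * π ^ 2 / B) * B) ^ ((3 - α) / 2) := by
              rw [Real.mul_rpow (le_of_lt hr0) hB0.le]; ring
          _ = c * (4 * π ^ 2) ^ ((3 - α) / 2) := by
              rw [div_mul_cancel₀]; exact ne_of_gt hB0
          _ = c * (2 * π) ^ (3 - α) := by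
              rw [show (4 * π ^ 2 : ℝ) = (2 * π) ^ (2:ℕ) by ring,
                ← Real.rpow_natCast (2 * π) 2, ← Real.rpow_mul h2π.le]
              rw [show ((2:ℕ):ℝ) * ((3 - α) / 2) = 3 - α by push_cast; ring]
      have hz_ea : (1:ℝ) ≤ z ^ (η + α) := Real.one_le_rpow hz1 heb
      have eε : (ε ^ 2)⁻¹ * ε ^ (3 + η) = ε ^ (1 - α) * ε ^ (η + α) := by
        rw [← Real.rpow_natCast ε 2, ← Real.rpow_neg hε0.le, ← Real.rpow_add hε0,
          ← Real.rpow_add hε0]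
        congr 1; push_cast; ring
      have e2π : (2 * π) ^ (3 - α) * (2 * π) ^ (η + α) = (2 * π) ^ ((3:ℝ) + η) := by
        rw [← Real.rpow_add h2π]; congr 1; ring
      have en : n ^ (3 - α) * n ^ (η + α) = n ^ ((3:ℝ) + η) := by
        rw [← Real.rpow_add hnpos]; congr 1; ring
      have hzea : z ^ (η + α) = (2 * π) ^ (η + α) * ε ^ (η + α) * n ^ (η + α) := by
        rw [hzdef, Real.mul_rpow (by positivity) hn0, Real.mul_rpow h2π.le hε0.le]
      have hze3 : z ^ ((3:ℝ) + η) = (2 * π) ^ ((3:ℝ) + η) * ε ^ ((3:ℝ) + η) * n ^ ((3:ℝ) + η) := by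
        rw [hzdef, Real.mul_rpow (by positivity) hn0, Real.mul_rpow h2π.le hε0.le]
      have key : q * ε ^ (1 - α) * J ^ ((3 - α) / 2) ≤ (ε ^ 2)⁻¹ * (c * z ^ (3 + η)) := by
        calc q * ε ^ (1 - α) * J ^ ((3 - α) / 2)
            ≤ (q * B ^ ((3 - α) / 2)) * (ε ^ (1 - α) * n ^ (3 - α)) := step1
          _ ≤ (c * (2 * π) ^ (3 - α)) * (ε ^ (1 - α) * n ^ (3 - α)) := by
              apply mul_le_mul_of_nonneg_right step2
              have := Real.rpow_nonneg hε0.le (1 - α)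
              have := Real.rpow_nonneg hn0 (3 - α)
              positivity
          _ ≤ (c * (2 * π) ^ (3 - α)) * (ε ^ (1 - α) * n ^ (3 - α)) * z ^ (η + α) := by
              apply le_mul_of_one_le_right _ hz_ea
              have h1 := Real.rpow_nonneg hε0.le (1 - α)
              have h2 := Real.rpow_nonneg hn0 (3 - α)
              have h3 := (Real.rpow_pos_of_pos h2π (3 - α)).le
              positivity
          _ = c * ((2 * π) ^ (3 - α) * (2 * π) ^ (η + α)) * (ε ^ (1 - α) * ε ^ (η + α))
              * (n ^ (3 - α) * n ^ (η + α)) := by rw [hzea]; ring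
          _ = c * (2 * π) ^ ((3:ℝ) + η) * ((ε ^ 2)⁻¹ * ε ^ (3 + η)) * n ^ ((3:ℝ) + η) := by
              rw [e2π, en, ← eε]
          _ = (ε ^ 2)⁻¹ * (c * z ^ (3 + η)) := by rw [hze3]; ring
      calc q * ε ^ (1 - α) * J ^ ((3 - α) / 2) ≤ (ε ^ 2)⁻¹ * (c * z ^ (3 + η)) := key
        _ ≤ (ε ^ 2)⁻¹ * Q z := by
            apply mul_le_mul_of_nonneg_left (hgrowth z hz1) (by positivity)
        _ ≤ 1 + (ε ^ 2)⁻¹ * Q z := by linarith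
    · -- quadratic regime
      push_neg at hz1
      have hmz : m * z ^ 2 ≤ Q z := hmQ z ⟨hz0, hz1.le⟩
      have hπ1 : (1:ℝ) ≤ 2 * π := by linarith [Real.pi_gt_three]
      have hεn1 : ε * n ≤ 1 := by
        have hzlt : 2 * π * ε * n < 1 := hz1
        calc ε * n = 1 * (ε * n) := by ring
          _ ≤ (2 * π) * (ε * n) := mul_le_mul_of_nonneg_right hπ1 (by positivity)
          _ = 2 * π * ε * n := by ring
          _ ≤ 1 := hzlt.le
      have hεnp : (ε * n) ^ (1 - α) ≤ 1 :=
        Real.rpow_le_one (by positivity) hεn1 hea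
      have en2 : n ^ (3 - α) = n ^ (2:ℕ) * n ^ (1 - α) := by
        rw [← Real.rpow_natCast n 2, ← Real.rpow_add hnpos]
        congr 1; push_cast; ring
      have hεnn : ε ^ (1 - α) * n ^ (3 - α) ≤ n ^ 2 := by
        rw [en2]
        have : ε ^ (1 - α) * (n ^ (2:ℕ) * n ^ (1 - α)) = (ε * n) ^ (1 - α) * n ^ 2 := by
          rw [Real.mul_rpow hε0.le hn0]; ring
        rw [this]
        exact mul_le_of_le_one_left (sq_nonneg n) hεnp
      have step2 : q * B ^ ((3 - α) / 2) ≤ 4 * π ^ 2 * m := by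
        have hK2le : K2 ≤ 4 * π ^ 2 * m * B⁻¹ ^ ((3 - α) / 2) := by
          apply mul_le_mul_of_nonneg_left _ (by positivity)
          exact Real.rpow_le_rpow_of_exponent_ge hi0 hi1 hp2le
        have hBp : 0 ≤ B ^ ((3 - α) / 2) := (Real.rpow_pos_of_pos hB0 _).le
        calc q * B ^ ((3 - α) / 2) ≤ K2 * B ^ ((3 - α) / 2) :=
              mul_le_mul_of_nonneg_right hqK2 hBp
          _ ≤ 4 * π ^ 2 * m * B⁻¹ ^ ((3 - α) / 2) * B ^ ((3 - α) / 2) :=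
              mul_le_mul_of_nonneg_right hK2le hBp
          _ = 4 * π ^ 2 * m * (B⁻¹ * B) ^ ((3 - α) / 2) := by
              rw [Real.mul_rpow hi0.le hB0.le]; ring
          _ = 4 * π ^ 2 * m := by
              rw [inv_mul_cancel₀ (ne_of_gt hB0), Real.one_rpow, mul_one]
      have keyeq : (ε ^ 2)⁻¹ * (m * z ^ 2) = 4 * π ^ 2 * m * n ^ 2 := by
        rw [hzdef]; field_simp; ring
      calc q * ε ^ (1 - α) * J ^ ((3 - α) / 2)
          ≤ (q * B ^ ((3 - α) / 2)) * (ε ^ (1 - α) * n ^ (3 - α)) := step1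
        _ ≤ (4 * π ^ 2 * m) * n ^ 2 := by
            apply mul_le_mul step2 hεnn _ (by positivity)
            have := Real.rpow_nonneg hε0.le (1 - α)
            have := Real.rpow_nonneg hn0 (3 - α)
            positivity
        _ = (ε ^ 2)⁻¹ * (m * z ^ 2) := keyeq.symm
        _ ≤ (ε ^ 2)⁻¹ * Q z := mul_le_mul_of_nonneg_left hmz (by positivity)
        _ ≤ 1 + (ε ^ 2)⁻¹ * Q z := by linarith
end

section
/- Let β, γ ∈ ℝ with β + γ > 3. There exists C > 0 such that for all k ∈ ℤ³, the sum over all ℓ ∈ ℤ³ satisfying ⟨ℓ⟩ ≤ 8·⟨k−ℓ⟩ and ⟨k−ℓ⟩ ≤ 8·⟨ℓ⟩ of ⟨ℓ⟩^{−β}·⟨k−ℓ⟩^{−γ} converges and is at most C·⟨k⟩^{−(β+γ−3)}. -/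
open Real

def Mm (ℓ : Fin 3 → ℤ) : ℕ := Finset.univ.sup fun i => (ℓ i).natAbs

lemma znorm_sq (k : Fin 3 → ℤ) : znorm k ^ 2 = ∑ i, ((k i : ℝ))^2 := by
  rw [znorm, Real.sq_sqrt]; positivity

lemma one_le_jnorm (k : Fin 3 → ℤ) : 1 ≤ jnorm k := by
  rw [jnorm, Real.one_le_sqrt]
  nlinarith [sq_nonneg (znorm k), sq_nonneg π]

lemma jnorm_pos (k : Fin 3 → ℤ) : 0 < jnorm k := lt_of_lt_of_le one_pos (one_le_jnorm k)

lemma jnorm_sq (k : Fin 3 → ℤ) : jnorm k ^ 2 = 1 + 4 * π ^ 2 * znorm k ^ 2 := by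
  rw [jnorm, Real.sq_sqrt]; nlinarith [sq_nonneg (znorm k), sq_nonneg π]

lemma znorm_le_M (k : Fin 3 → ℤ) : znorm k ^ 2 ≤ 3 * (Mm k : ℝ)^2 := by
  rw [znorm_sq]
  have h : ∀ i, ((k i : ℝ))^2 ≤ (Mm k : ℝ)^2 := by
    intro i
    have h1 : (k i).natAbs ≤ Mm k :=
      Finset.le_sup (f := fun i => (k i).natAbs) (Finset.mem_univ i)
    have h1' : |k i| ≤ (Mm k : ℤ) := by rw [Int.abs_eq_natAbs]; exact_mod_cast h1
    have h2 : |(k i : ℝ)| ≤ (Mm k : ℝ) := by rw [← Int.cast_abs]; exact_mod_cast h1'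
    nlinarith [abs_nonneg ((k i : ℝ)), sq_abs ((k i:ℝ))]
  calc ∑ i, ((k i:ℝ))^2 ≤ ∑ _i : Fin 3, (Mm k : ℝ)^2 := Finset.sum_le_sum fun i _ => h i
    _ = 3 * (Mm k:ℝ)^2 := by rw [Finset.sum_const]; simp; try ring

lemma M_le_znorm (k : Fin 3 → ℤ) : (Mm k : ℝ) ≤ znorm k := by
  obtain ⟨i, hi⟩ := Finset.exists_mem_eq_sup Finset.univ ⟨0, Finset.mem_univ 0⟩
    (fun i => (k i).natAbs)
  have h : (Mm k : ℝ) = |(k i : ℝ)| := by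
    rw [Mm, hi.2, Nat.cast_natAbs, Int.cast_abs]
  rw [h, show |(k i:ℝ)| = Real.sqrt (((k i:ℝ))^2) by rw [Real.sqrt_sq_eq_abs]]
  apply Real.sqrt_le_sqrt
  exact Finset.single_le_sum (f := fun j => ((k j:ℝ))^2) (fun j _ => sq_nonneg _) (Finset.mem_univ i)

lemma M_self_le_sq (k : Fin 3 → ℤ) : (Mm k:ℝ) ≤ (Mm k:ℝ)^2 := by
  exact_mod_cast Nat.le_self_pow two_ne_zero (Mm k)

-- F2
lemma M_succ_le_jnorm (k : Fin 3 → ℤ) : (Mm k : ℝ) + 1 ≤ jnorm k := by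
  have h1 := M_le_znorm k
  have h2 : (0:ℝ) ≤ (Mm k : ℝ) := Nat.cast_nonneg _
  have hp : (3:ℝ) ≤ π := Real.pi_gt_three.le
  have hz := znorm_nonneg k
  have hsq : (Mm k:ℝ)^2 ≤ znorm k^2 := by nlinarith
  have hpi2 : (9:ℝ) ≤ π^2 := by nlinarith
  rw [jnorm]
  rw [show (Mm k:ℝ) + 1 = Real.sqrt (((Mm k:ℝ)+1)^2) by rw [Real.sqrt_sq (by linarith)]]
  apply Real.sqrt_le_sqrt
  nlinarith [M_self_le_sq k, mul_le_mul hpi2 hsq (sq_nonneg _) (by linarith : (0:ℝ) ≤ π^2)]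

-- F3
lemma jnorm_le_M (k : Fin 3 → ℤ) : jnorm k ≤ 11 * ((Mm k : ℝ) + 1) := by
  have h1 := znorm_le_M k
  have h2 : (0:ℝ) ≤ (Mm k : ℝ) := Nat.cast_nonneg _
  have hp2 : π^2 ≤ 10 := by nlinarith [Real.pi_lt_d2, Real.pi_pos]
  rw [jnorm]
  rw [show 11 * ((Mm k:ℝ)+1) = Real.sqrt ((11*((Mm k:ℝ)+1))^2) by rw [Real.sqrt_sq (by linarith)]]
  apply Real.sqrt_le_sqrt
  nlinarith [mul_le_mul hp2 h1 (by positivity) (by norm_num : (0:ℝ) ≤ 10), sq_nonneg π]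

-- triangle
lemma znorm_triangle (k ℓ : Fin 3 → ℤ) : znorm k ≤ znorm ℓ + znorm (k - ℓ) := by
  set f : (Fin 3 → ℤ) → EuclideanSpace ℝ (Fin 3) :=
    fun m => (WithLp.equiv 2 (Fin 3 → ℝ)).symm (fun i => (m i:ℝ)) with hf
  have hnorm : ∀ m, znorm m = ‖f m‖ := by
    intro m
    rw [EuclideanSpace.norm_eq, znorm]
    congr 1
    apply Finset.sum_congr rfl
    intro i _
    simp [hf, Real.norm_eq_abs, sq_abs]
  have hadd : f k = f ℓ + f (k - ℓ) := by
    ext i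
    simp [hf]
  rw [hnorm, hnorm, hnorm, hadd]
  exact norm_add_le _ _

-- F4
lemma jnorm_k_le (k ℓ : Fin 3 → ℤ) (h : jnorm (k - ℓ) ≤ 8 * jnorm ℓ) :
    jnorm k ≤ 12 * jnorm ℓ := by
  have ht := znorm_triangle k ℓ
  have h2 : jnorm (k-ℓ)^2 ≤ 64 * jnorm ℓ^2 := by
    nlinarith [jnorm_pos (k-ℓ), jnorm_pos ℓ]
  rw [jnorm_sq, jnorm_sq] at h2
  have hz := znorm_nonneg k
  have hz2 := znorm_nonneg ℓ
  have hz3 := znorm_nonneg (k - ℓ)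
  have hpos := jnorm_pos ℓ
  rw [jnorm]
  rw [show 12 * jnorm ℓ = Real.sqrt ((12 * jnorm ℓ)^2) by
    rw [Real.sqrt_sq (by linarith : (0:ℝ) ≤ 12 * jnorm ℓ)]]
  apply Real.sqrt_le_sqrt
  have hj : (12 * jnorm ℓ)^2 = 144 * (1 + 4*π^2* znorm ℓ^2) := by
    rw [mul_pow, jnorm_sq]; ring
  rw [hj]
  nlinarith [mul_self_le_mul_self hz ht, sq_nonneg (znorm ℓ - znorm (k-ℓ)), sq_nonneg π]

noncomputable def boxF (n : ℕ) : Finset (Fin 3 → ℤ) := Fintype.piFinset fun _ => Finset.Icc (-(n:ℤ)) n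

lemma mem_boxF {n : ℕ} {ℓ : Fin 3 → ℤ} : ℓ ∈ boxF n ↔ Mm ℓ ≤ n := by
  rw [boxF, Fintype.mem_piFinset, Mm, Finset.sup_le_iff]
  constructor
  · intro h i _
    have := h i
    rw [Finset.mem_Icc] at this
    omega
  · intro h i
    have := h i (Finset.mem_univ i)
    rw [Finset.mem_Icc]
    omega

lemma card_boxF (n : ℕ) : (boxF n).card = (2*n+1)^3 := by
  rw [boxF, Fintype.card_piFinset]
  simp [Int.card_Icc]
  omega

noncomputable def shellF : ℕ → Finset (Fin 3 → ℤ)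
  | 0 => boxF 0
  | (n+1) => boxF (n+1) \ boxF n

lemma mem_shellF {n : ℕ} {ℓ : Fin 3 → ℤ} : ℓ ∈ shellF n ↔ Mm ℓ = n := by
  cases n with
  | zero => rw [shellF, mem_boxF]; omega
  | succ m => rw [shellF, Finset.mem_sdiff, mem_boxF, mem_boxF]; omega

lemma card_shellF_le (n : ℕ) : (shellF n).card ≤ 26*(n+1)^2 := by
  cases n with
  | zero => rw [shellF, card_boxF]; norm_num
  | succ m =>
    rw [shellF, Finset.card_sdiff_of_subset (by intro x hx; rw [mem_boxF] at *; omega),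
      card_boxF, card_boxF]
    rw [tsub_le_iff_right]
    zify
    nlinarith [(by positivity : (0:ℤ) ≤ (m:ℤ))]

lemma core_rpow {ε : ℝ} (hε : 0 < ε) {a : ℝ} (ha : 0 < a) :
    (a+1)^(-ε) + ε*(a+1)^(-(1+ε)) ≤ a^(-ε) := by
  have ha1 : 0 < a + 1 := by linarith
  have hlog : 1/(a+1) ≤ Real.log ((a+1)/a) := by
    have h1 : Real.log (a/(a+1)) ≤ a/(a+1) - 1 := Real.log_le_sub_one_of_pos (by positivity)
    have h2 : Real.log ((a+1)/a) = - Real.log (a/(a+1)) := by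
      rw [← Real.log_inv]
      congr 1
      field_simp
    have h3 : a/(a+1) - 1 = -(1/(a+1)) := by field_simp; ring
    rw [h2]; rw [h3] at h1; linarith
  have hkey : 1 + ε/(a+1) ≤ ((a+1)/a)^ε := by
    rw [Real.rpow_def_of_pos (by positivity), mul_comm]
    calc 1 + ε/(a+1) = ε * (1/(a+1)) + 1 := by ring
      _ ≤ ε * Real.log ((a+1)/a) + 1 := by
          have := mul_le_mul_of_nonneg_left hlog hε.le
          linarith
      _ ≤ Real.exp (ε * Real.log ((a+1)/a)) := Real.add_one_le_exp _
  have hid : a^(-ε) = (a+1)^(-ε) * ((a+1)/a)^ε := by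
    rw [Real.div_rpow ha1.le ha.le, Real.rpow_neg ha1.le, Real.rpow_neg ha.le]
    have h1 : (a+1)^ε ≠ 0 := by positivity
    have h2 : a^ε ≠ 0 := by positivity
    field_simp
  have hsplit : (a+1)^(-(1+ε)) = (a+1)^(-ε) / (a+1) := by
    rw [show -(1+ε) = -ε + (-1) by ring, Real.rpow_add ha1, Real.rpow_neg_one]
    field_simp
  have hpos : 0 < (a+1)^(-ε) := Real.rpow_pos_of_pos ha1 _
  calc (a+1)^(-ε) + ε*(a+1)^(-(1+ε)) = (a+1)^(-ε) * (1 + ε/(a+1)) := by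
        rw [hsplit]; field_simp
    _ ≤ (a+1)^(-ε) * ((a+1)/a)^ε := by
        exact mul_le_mul_of_nonneg_left hkey hpos.le
    _ = a^(-ε) := hid.symm

lemma oneD {ε : ℝ} (hε : 0 < ε) (T : ℝ) (n : ℕ) :
    ∑ m ∈ Finset.range n, (if T ≤ (m:ℝ)+1 then ((m:ℝ)+1)^(-(1+ε)) else 0)
      ≤ (2^(1+ε)/ε) * (max T 1)^(-ε) := by
  set A := max T 1 with hA
  have hA1 : 1 ≤ A := le_max_right _ _
  have hA0 : 0 < A := by linarith
  set K := (2:ℝ)^(1+ε)/ε with hK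
  have hKpos : 0 < K := by positivity
  set h : ℕ → ℝ := fun m => min (A^(-ε)) (((m:ℝ)+1)^(-ε)) with hh
  have hstep : ∀ m : ℕ, (if T ≤ (m:ℝ)+1 then ((m:ℝ)+1)^(-(1+ε)) else 0)
      ≤ K * (h m - h (m+1)) := by
    intro m
    have hm1 : (0:ℝ) < (m:ℝ)+1 := by positivity
    have hm2 : (0:ℝ) < (m:ℝ)+2 := by positivity
    have hanti : ((m:ℝ)+2)^(-ε) ≤ ((m:ℝ)+1)^(-ε) :=
      Real.rpow_le_rpow_of_nonpos hm1 (by linarith) (by linarith)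
    by_cases hc : T ≤ (m:ℝ)+1
    · rw [if_pos hc]
      have hAm : A ≤ (m:ℝ)+1 := max_le hc (by linarith [Nat.cast_nonneg (α := ℝ) m])
      have h1 : h m = ((m:ℝ)+1)^(-ε) :=
        min_eq_right (Real.rpow_le_rpow_of_nonpos hA0 hAm (by linarith))
      have h2 : h (m+1) = ((m:ℝ)+2)^(-ε) := by
        have : h (m+1) = min (A^(-ε)) (((m:ℝ)+2)^(-ε)) := by
          rw [hh]; push_cast; ring_nf
        rw [this]
        exact min_eq_right (Real.rpow_le_rpow_of_nonpos hA0 (by linarith) (by linarith))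
      rw [h1, h2]
      have hcore := core_rpow hε hm1
      have hdbl : ((m:ℝ)+1+1) = (m:ℝ)+2 := by ring
      rw [hdbl] at hcore
      -- (m+2)^(-(1+ε)) ≥ 2^(-(1+ε)) * (m+1)^(-(1+ε))
      have hsc : (2:ℝ)^(-(1+ε)) * ((m:ℝ)+1)^(-(1+ε)) ≤ ((m:ℝ)+2)^(-(1+ε)) := by
        rw [← Real.mul_rpow (by norm_num) hm1.le]
        exact Real.rpow_le_rpow_of_nonpos (by positivity) (by linarith) (by linarith)
      have h2e : K * (ε * ((2:ℝ)^(-(1+ε)) * ((m:ℝ)+1)^(-(1+ε)))) = ((m:ℝ)+1)^(-(1+ε)) := by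
        rw [hK, Real.rpow_neg (by norm_num)]
        have : (2:ℝ)^(1+ε) ≠ 0 := by positivity
        field_simp
      calc ((m:ℝ)+1)^(-(1+ε)) = K * (ε * ((2:ℝ)^(-(1+ε)) * ((m:ℝ)+1)^(-(1+ε)))) := h2e.symm
        _ ≤ K * (ε * ((m:ℝ)+2)^(-(1+ε))) := by
            apply mul_le_mul_of_nonneg_left _ hKpos.le
            exact mul_le_mul_of_nonneg_left hsc hε.le
        _ ≤ K * (((m:ℝ)+1)^(-ε) - ((m:ℝ)+2)^(-ε)) := by
            apply mul_le_mul_of_nonneg_left _ hKpos.le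
            linarith
    · rw [if_neg hc]
      have hmono : h (m+1) ≤ h m := by
        apply min_le_min le_rfl
        have : h (m+1) = min (A^(-ε)) (((m:ℝ)+2)^(-ε)) := by
          rw [hh]; push_cast; ring_nf
        push_cast
        exact Real.rpow_le_rpow_of_nonpos hm1 (by linarith) (by linarith)
      have := sub_nonneg.mpr hmono
      positivity
  calc ∑ m ∈ Finset.range n, (if T ≤ (m:ℝ)+1 then ((m:ℝ)+1)^(-(1+ε)) else 0)
      ≤ ∑ m ∈ Finset.range n, K * (h m - h (m+1)) :=
        Finset.sum_le_sum fun m _ => hstep m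
    _ = K * (h 0 - h n) := by rw [← Finset.mul_sum, Finset.sum_range_sub']
    _ ≤ K * A^(-ε) := by
        apply mul_le_mul_of_nonneg_left _ hKpos.le
        have h0 : h 0 ≤ A^(-ε) := min_le_left _ _
        have hn : 0 ≤ h n := le_min (by positivity) (by positivity)
        linarith

lemma fiber_eq (n : ℕ) : {ℓ : Fin 3 → ℤ | Mm ℓ = n} = ↑(shellF n) := by
  ext ℓ; simp [mem_shellF]

lemma sumKey {s : ℝ} (hs : 3 < s) : ∃ C : ℝ, 0 < C ∧
    Summable (fun ℓ : Fin 3 → ℤ => jnorm ℓ ^ (-s)) ∧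
    ∀ T : ℝ, 1 ≤ T →
      (∑' ℓ : Fin 3 → ℤ, (if T ≤ jnorm ℓ then jnorm ℓ ^ (-s) else 0)) ≤ C * T^(-(s-3)) := by
  set ε := s - 3 with hε
  have hεpos : 0 < ε := by linarith
  set fib : ℕ → Set (Fin 3 → ℤ) := fun n => {ℓ | Mm ℓ = n} with hfib
  have huniq : ∀ ℓ : Fin 3 → ℤ, ∃! n, ℓ ∈ fib n := fun ℓ =>
    ⟨Mm ℓ, rfl, fun n hn => hn.symm⟩
  -- pointwise bound on each shell
  have hshell_bound : ∀ n : ℕ, ∀ ℓ ∈ shellF n, jnorm ℓ ^ (-s) ≤ ((n:ℝ)+1)^(-s) := by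
    intro n ℓ hℓ
    have h1 : ((n:ℝ)+1) ≤ jnorm ℓ := by
      have := M_succ_le_jnorm ℓ
      rw [mem_shellF.mp hℓ] at this
      linarith
    exact Real.rpow_le_rpow_of_nonpos (by positivity) h1 (by linarith)
  -- bound for shell sums
  have houter_bound : ∀ n : ℕ, ∑ ℓ ∈ shellF n, jnorm ℓ ^ (-s) ≤ 26*((n:ℝ)+1)^2 * ((n:ℝ)+1)^(-s) := by
    intro n
    calc ∑ ℓ ∈ shellF n, jnorm ℓ ^ (-s) ≤ (shellF n).card • (((n:ℝ)+1)^(-s)) :=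
          Finset.sum_le_card_nsmul _ _ _ (hshell_bound n)
      _ = ((shellF n).card : ℝ) * ((n:ℝ)+1)^(-s) := by rw [nsmul_eq_mul]
      _ ≤ 26*((n:ℝ)+1)^2 * ((n:ℝ)+1)^(-s) := by
          apply mul_le_mul_of_nonneg_right _ (by positivity)
          calc ((shellF n).card : ℝ) ≤ ((26*(n+1)^2 : ℕ) : ℝ) := by
                exact_mod_cast card_shellF_le n
            _ = 26*((n:ℝ)+1)^2 := by push_cast; ring
  -- summability of the dominating ℕ-series
  have hb_s : Summable (fun n : ℕ => 26*((n:ℝ)+1)^2 * ((n:ℝ)+1)^(-s)) := by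
    have h1 : Summable (fun n : ℕ => ((n:ℝ)+1)^(2-s)) := by
      have := (Real.summable_nat_rpow (p := 2-s)).mpr (by linarith)
      have h2 := (summable_nat_add_iff 1).mpr this
      apply h2.congr
      intro n
      push_cast
      ring_nf
    apply (h1.mul_left 26).congr
    intro n
    have hpos : (0:ℝ) < (n:ℝ)+1 := by positivity
    rw [show ((n:ℝ)+1)^(2-s) = ((n:ℝ)+1)^(2:ℝ) * ((n:ℝ)+1)^(-s) by
      rw [← Real.rpow_add hpos]; ring_nf]
    rw [Real.rpow_two]
    ring
  -- summability of jnorm^(-s)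
  have hg'_nonneg : ∀ ℓ : Fin 3 → ℤ, 0 ≤ jnorm ℓ ^ (-s) := fun ℓ => Real.rpow_nonneg (jnorm_pos ℓ).le _
  have hsum : Summable (fun ℓ : Fin 3 → ℤ => jnorm ℓ ^ (-s)) := by
    rw [summable_partition hg'_nonneg huniq]
    constructor
    · intro n
      have : Finite (fib n) := by rw [hfib]; simp only; rw [fiber_eq]; exact (shellF n).finite_toSet
      exact Summable.of_finite
    · apply hb_s.of_nonneg_of_le
      · intro n
        apply tsum_nonneg
        intro ℓ
        exact hg'_nonneg _
      · intro n
        have he : (∑' ℓ : fib n, jnorm ℓ.1 ^ (-s)) = ∑ ℓ ∈ shellF n, jnorm ℓ ^ (-s) := by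
          rw [hfib]; simp only; rw [fiber_eq]
          exact Finset.tsum_subtype' (shellF n) (fun ℓ => jnorm ℓ ^ (-s))
        rw [he]
        exact houter_bound n
  refine ⟨26 * (2^(1+ε)/ε) * 11^ε, by positivity, hsum, ?_⟩
  intro T hT
  set g : (Fin 3 → ℤ) → ℝ := fun ℓ => if T ≤ jnorm ℓ then jnorm ℓ ^ (-s) else 0 with hg
  have hg_nonneg : ∀ ℓ, 0 ≤ g ℓ := by
    intro ℓ; rw [hg]; dsimp only; split
    · exact hg'_nonneg ℓ
    · exact le_refl 0
  have hg_le : ∀ ℓ, g ℓ ≤ jnorm ℓ ^ (-s) := by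
    intro ℓ; rw [hg]; dsimp only; split
    · exact le_refl _
    · exact hg'_nonneg ℓ
  have hgsum : Summable g := hsum.of_nonneg_of_le hg_nonneg hg_le
  obtain ⟨hfib_sum, houter_sum⟩ := (summable_partition hg_nonneg huniq).mp hgsum
  -- regroup the sum over shells
  set e := Set.sigmaEquiv fib huniq with he
  have hregroup : tsum g = ∑' n : ℕ, ∑' ℓ : fib n, g ℓ.1 := by
    rw [← e.tsum_eq g]
    exact (e.summable_iff.mpr hgsum).tsum_sigma' (fun n => hfib_sum n)
  rw [hregroup]
  set bb : ℕ → ℝ := fun n =>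
    if T ≤ 11*((n:ℝ)+1) then 26*((n:ℝ)+1)^2 * ((n:ℝ)+1)^(-s) else 0 with hbb
  have hbb_nonneg : ∀ n, 0 ≤ bb n := by
    intro n; rw [hbb]; dsimp only; split
    · positivity
    · exact le_refl 0
  have hbb_le : ∀ n, bb n ≤ 26*((n:ℝ)+1)^2 * ((n:ℝ)+1)^(-s) := by
    intro n; rw [hbb]; dsimp only; split
    · exact le_refl _
    · positivity
  have hbb_sum : Summable bb := hb_s.of_nonneg_of_le hbb_nonneg hbb_le
  have hfib_fin : ∀ n, (∑' ℓ : fib n, g ℓ.1) = ∑ ℓ ∈ shellF n, g ℓ := by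
    intro n
    rw [hfib]; simp only; rw [fiber_eq]
    exact Finset.tsum_subtype' (shellF n) g
  have hinner : ∀ n : ℕ, (∑' ℓ : fib n, g ℓ.1) ≤ bb n := by
    intro n
    rw [hfib_fin n, hbb]
    dsimp only
    split
    · calc ∑ ℓ ∈ shellF n, g ℓ ≤ ∑ ℓ ∈ shellF n, jnorm ℓ ^ (-s) :=
            Finset.sum_le_sum fun ℓ _ => hg_le ℓ
        _ ≤ 26*((n:ℝ)+1)^2 * ((n:ℝ)+1)^(-s) := houter_bound n
    · next hcond =>
        have : ∀ ℓ ∈ shellF n, g ℓ = 0 := by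
          intro ℓ hℓ
          rw [hg]
          dsimp only
          rw [if_neg]
          push_neg at hcond ⊢
          calc jnorm ℓ ≤ 11 * ((Mm ℓ : ℝ)+1) := jnorm_le_M ℓ
            _ = 11 * ((n:ℝ)+1) := by rw [mem_shellF.mp hℓ]
            _ < T := hcond
        rw [Finset.sum_eq_zero this]
  have hmain : (∑' n : ℕ, ∑' ℓ : fib n, g ℓ.1) ≤ ∑' n, bb n :=
    Summable.tsum_le_tsum hinner houter_sum hbb_sum
  -- evaluate ∑' bb
  have hbb_eq : ∀ n : ℕ, bb n = 26 * (if T/11 ≤ (n:ℝ)+1 then ((n:ℝ)+1)^(-(1+ε)) else 0) := by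
    intro n
    have hpos : (0:ℝ) < (n:ℝ)+1 := by positivity
    have hcond : (T ≤ 11*((n:ℝ)+1)) ↔ (T/11 ≤ (n:ℝ)+1) := by
      rw [div_le_iff₀ (by norm_num : (0:ℝ) < 11)]
      constructor <;> intro h <;> linarith
    rw [hbb]
    dsimp only
    by_cases hcase : T ≤ 11*((n:ℝ)+1)
    · rw [if_pos hcase, if_pos (hcond.mp hcase)]
      rw [show -(1+ε) = 2 + (-s) by rw [hε]; ring, Real.rpow_add hpos, Real.rpow_two]
      ring
    · rw [if_neg hcase, if_neg (fun h => hcase (hcond.mpr h))]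
      ring
  have htail : (∑' n : ℕ, (if T/11 ≤ (n:ℝ)+1 then ((n:ℝ)+1)^(-(1+ε)) else 0))
      ≤ (2^(1+ε)/ε) * (max (T/11) 1)^(-ε) := by
    apply Real.tsum_le_of_sum_range_le
    · intro n; split
      · positivity
      · exact le_refl 0
    · exact oneD hεpos (T/11)
  have hTpos : (0:ℝ) < T := by linarith
  have hmax : (max (T/11) 1)^(-ε) ≤ 11^ε * T^(-ε) := by
    have h1 : (0:ℝ) < T/11 := by positivity
    have h2 : T/11 ≤ max (T/11) 1 := le_max_left _ _
    calc (max (T/11) 1)^(-ε) ≤ (T/11)^(-ε) :=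
          Real.rpow_le_rpow_of_nonpos h1 h2 (by linarith)
      _ = 11^ε * T^(-ε) := by
          rw [Real.div_rpow hTpos.le (by norm_num : (0:ℝ) ≤ 11), Real.rpow_neg (by norm_num : (0:ℝ) ≤ 11)]
          field_simp
  calc (∑' n : ℕ, ∑' ℓ : fib n, g ℓ.1) ≤ ∑' n, bb n := hmain
    _ = 26 * ∑' n : ℕ, (if T/11 ≤ (n:ℝ)+1 then ((n:ℝ)+1)^(-(1+ε)) else 0) := by
        rw [← tsum_mul_left]
        exact tsum_congr hbb_eq
    _ ≤ 26 * ((2^(1+ε)/ε) * (max (T/11) 1)^(-ε)) := by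
        apply mul_le_mul_of_nonneg_left htail (by norm_num)
    _ ≤ 26 * ((2^(1+ε)/ε) * (11^ε * T^(-ε))) := by
        apply mul_le_mul_of_nonneg_left _ (by norm_num)
        apply mul_le_mul_of_nonneg_left hmax (by positivity)
    _ = 26 * (2^(1+ε)/ε) * 11^ε * T^(-ε) := by ring

/-- for `β + γ > 3` there is `C > 0` such that for all `k ∈ ℤ³` the sum over
`ℓ ∈ ℤ³` with `⟨ℓ⟩ ≤ 8⟨k−ℓ⟩` and `⟨k−ℓ⟩ ≤ 8⟨ℓ⟩` of `⟨ℓ⟩^(−β)·⟨k−ℓ⟩^(−γ)` converges and is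
at most `C·⟨k⟩^(−(β+γ−3))`. -/
theorem stmt_4 (β γ : ℝ) (hβγ : 3 < β + γ) :
    ∃ C : ℝ, 0 < C ∧ ∀ k : Fin 3 → ℤ,
      Summable (fun ℓ : {ℓ : Fin 3 → ℤ // jnorm ℓ ≤ 8 * jnorm (k - ℓ) ∧
          jnorm (k - ℓ) ≤ 8 * jnorm ℓ} =>
        jnorm ℓ.1 ^ (-β) * jnorm (k - ℓ.1) ^ (-γ)) ∧
      (∑' ℓ : {ℓ : Fin 3 → ℤ // jnorm ℓ ≤ 8 * jnorm (k - ℓ) ∧ jnorm (k - ℓ) ≤ 8 * jnorm ℓ},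
        jnorm ℓ.1 ^ (-β) * jnorm (k - ℓ.1) ^ (-γ)) ≤ C * jnorm k ^ (-(β + γ - 3)) := by
  obtain ⟨C₁, hC₁, hsum_s, htail⟩ := sumKey hβγ
  set s := β + γ with hsdef
  set ε := s - 3 with hε
  have hεpos : 0 < ε := by rw [hε, hsdef]; linarith
  set D : ℝ := (8:ℝ)^|γ| with hD
  have hDpos : 0 < D := by rw [hD]; positivity
  refine ⟨D * (C₁ * 12^ε), by positivity, fun k => ?_⟩
  set P : Set (Fin 3 → ℤ) :=
    {ℓ | jnorm ℓ ≤ 8 * jnorm (k - ℓ) ∧ jnorm (k - ℓ) ≤ 8 * jnorm ℓ} with hP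
  set f : (Fin 3 → ℤ) → ℝ := fun ℓ => jnorm ℓ ^ (-β) * jnorm (k - ℓ) ^ (-γ) with hf
  have hf_nonneg : ∀ ℓ, 0 ≤ f ℓ := by
    intro ℓ
    exact mul_nonneg (Real.rpow_nonneg (jnorm_pos ℓ).le _) (Real.rpow_nonneg (jnorm_pos _).le _)
  -- step 1
  have hstep1 : ∀ ℓ ∈ P, f ℓ ≤ D * jnorm ℓ ^ (-s) := by
    intro ℓ hℓ
    obtain ⟨h1, h2⟩ := hℓ
    have hjp := jnorm_pos ℓ
    have hkey : jnorm (k - ℓ) ^ (-γ) ≤ D * jnorm ℓ ^ (-γ) := by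
      rcases le_or_gt 0 γ with hγ | hγ
      · have hbase : jnorm ℓ / 8 ≤ jnorm (k - ℓ) := by linarith
        have hbp : (0:ℝ) < jnorm ℓ / 8 := by positivity
        calc jnorm (k - ℓ) ^ (-γ) ≤ (jnorm ℓ / 8) ^ (-γ) :=
              Real.rpow_le_rpow_of_nonpos hbp hbase (by linarith)
          _ = D * jnorm ℓ ^ (-γ) := by
              rw [hD, abs_of_nonneg hγ,
                Real.div_rpow hjp.le (by norm_num : (0:ℝ) ≤ 8),
                Real.rpow_neg (by norm_num : (0:ℝ) ≤ 8)]
              field_simp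
      · calc jnorm (k - ℓ) ^ (-γ) ≤ (8 * jnorm ℓ) ^ (-γ) :=
              Real.rpow_le_rpow (jnorm_pos _).le h2 (by linarith)
          _ = D * jnorm ℓ ^ (-γ) := by
              rw [hD, abs_of_neg hγ,
                Real.mul_rpow (by norm_num : (0:ℝ) ≤ 8) hjp.le]
    calc f ℓ ≤ jnorm ℓ ^ (-β) * (D * jnorm ℓ ^ (-γ)) := by
          apply mul_le_mul_of_nonneg_left hkey (Real.rpow_nonneg hjp.le _)
      _ = D * (jnorm ℓ ^ (-β) * jnorm ℓ ^ (-γ)) := by ring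
      _ = D * jnorm ℓ ^ (-s) := by
          rw [← Real.rpow_add hjp, hsdef]
          ring_nf
  -- step 2
  set Tk : ℝ := max 1 (jnorm k / 12) with hTk
  have hTk1 : 1 ≤ Tk := le_max_left _ _
  have hstep2 : ∀ ℓ ∈ P, Tk ≤ jnorm ℓ := by
    intro ℓ hℓ
    apply max_le (one_le_jnorm ℓ)
    have := jnorm_k_le k ℓ hℓ.2
    linarith
  -- summability
  have hmaj : Summable (fun ℓ : Fin 3 → ℤ => D * jnorm ℓ ^ (-s)) := hsum_s.mul_left D
  have hsub : Summable (fun ℓ : ↥P => D * jnorm ℓ.1 ^ (-s)) := hmaj.subtype P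
  have hSummable : Summable (fun ℓ : ↥P => f ℓ.1) :=
    hsub.of_nonneg_of_le (fun ℓ => hf_nonneg ℓ.1) (fun ℓ => hstep1 ℓ.1 ℓ.2)
  refine ⟨hSummable, ?_⟩
  -- the tsum bound
  set m : (Fin 3 → ℤ) → ℝ := fun ℓ => D * (if Tk ≤ jnorm ℓ then jnorm ℓ ^ (-s) else 0) with hm
  have hm_nonneg : ∀ ℓ, 0 ≤ m ℓ := by
    intro ℓ; rw [hm]; dsimp only
    have : (0:ℝ) ≤ (if Tk ≤ jnorm ℓ then jnorm ℓ ^ (-s) else 0) := by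
      split
      · exact Real.rpow_nonneg (jnorm_pos ℓ).le _
      · exact le_refl 0
    positivity
  have hm_sum : Summable m := by
    apply Summable.mul_left
    apply hsum_s.of_nonneg_of_le
    · intro ℓ; split
      · exact Real.rpow_nonneg (jnorm_pos ℓ).le _
      · exact le_refl 0
    · intro ℓ; split
      · exact le_refl _
      · exact Real.rpow_nonneg (jnorm_pos ℓ).le _
  have hind : ∀ ℓ, P.indicator f ℓ ≤ m ℓ := by
    intro ℓ
    by_cases hℓ : ℓ ∈ P
    · rw [Set.indicator_of_mem hℓ, hm]
      dsimp only
      rw [if_pos (hstep2 ℓ hℓ)]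
      exact hstep1 ℓ hℓ
    · rw [Set.indicator_of_notMem hℓ]
      exact hm_nonneg ℓ
  have hindsum : Summable (P.indicator f) := summable_subtype_iff_indicator.mp hSummable
  have heq : (∑' ℓ : ↥P, f ℓ.1) = ∑' ℓ, P.indicator f ℓ := tsum_subtype P f
  have hTkpos : (0:ℝ) < Tk := by linarith
  have hTkk : Tk ^ (-(s-3)) ≤ 12^ε * jnorm k ^ (-(s-3)) := by
    have h1 : (0:ℝ) < jnorm k / 12 := div_pos (jnorm_pos k) (by norm_num)
    have h2 : jnorm k / 12 ≤ Tk := le_max_right _ _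
    calc Tk ^ (-(s-3)) ≤ (jnorm k / 12) ^ (-(s-3)) :=
          Real.rpow_le_rpow_of_nonpos h1 h2 (by rw [← hε]; linarith)
      _ = 12^ε * jnorm k ^ (-(s-3)) := by
          rw [Real.div_rpow (jnorm_pos k).le (by norm_num : (0:ℝ) ≤ 12), ← hε,
            Real.rpow_neg (by norm_num : (0:ℝ) ≤ 12)]
          field_simp
  calc (∑' ℓ : ↥P, f ℓ.1) = ∑' ℓ, P.indicator f ℓ := heq
    _ ≤ ∑' ℓ, m ℓ := Summable.tsum_le_tsum hind hindsum hm_sum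
    _ = D * ∑' ℓ, (if Tk ≤ jnorm ℓ then jnorm ℓ ^ (-s) else 0) := tsum_mul_left
    _ ≤ D * (C₁ * Tk ^ (-(s-3))) := by
        apply mul_le_mul_of_nonneg_left (htail Tk hTk1) hDpos.le
    _ ≤ D * (C₁ * (12^ε * jnorm k ^ (-(s-3)))) := by
        apply mul_le_mul_of_nonneg_left _ hDpos.le
        exact mul_le_mul_of_nonneg_left hTkk hC₁.le
    _ = D * (C₁ * 12^ε) * jnorm k ^ (-(β + γ - 3)) := by rw [hsdef]; ring
end

section
/- Let κ ∈ (0, 1/(8n)). There exists C > 0 such that for all ε ∈ (0,1) and all x, y ∈ ℝ: ε^{−3/2}·|V'(√ε·x; √ε·y)| ≤ C·ε^{1/4}·|y|·(1 + ε^{1/2+κ}·|x| + |y|)^{2n−2}. -/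
open Real Polynomial

/-- The third-order Taylor remainder of `V'`:
`V'(x;y) = V'(x+y) − Σ_{j=0}^{3} V^{(j+1)}(x)·y^j/j!`. -/
noncomputable def Vrem (V : Polynomial ℝ) (x y : ℝ) : ℝ :=
  (derivative V).eval (x + y) -
    ∑ j ∈ Finset.range 4, ((derivative^[j + 1] V).eval x) * y ^ j / (Nat.factorial j : ℝ)

lemma evalBound (Q : Polynomial ℝ) (m : ℕ) (h : Q.natDegree ≤ m) (a : ℝ) :
    |Q.eval a| ≤ (∑ i ∈ Finset.range (m+1), |Q.coeff i|) * (1 + |a|) ^ m := by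
  rw [Polynomial.eval_eq_sum_range' (Nat.lt_succ_of_le h)]
  refine (Finset.abs_sum_le_sum_abs _ _).trans ?_
  rw [Finset.sum_mul]
  refine Finset.sum_le_sum fun i hi => ?_
  rw [abs_mul, abs_pow]
  have h0 : (0:ℝ) ≤ |a| := abs_nonneg a
  have h1 : |a| ^ i ≤ (1 + |a|) ^ m :=
    (pow_le_pow_left₀ h0 (by linarith) i).trans
      (pow_le_pow_right₀ (by linarith) (Finset.mem_range_succ_iff.mp hi))
  have := abs_nonneg (Q.coeff i)
  nlinarith [pow_nonneg h0 i]

lemma taylorExpand (P : Polynomial ℝ) (N : ℕ) (hN : P.natDegree < N) (x y : ℝ) :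
    P.eval (x + y) =
      ∑ j ∈ Finset.range N, (derivative^[j] P).eval x * y ^ j / (Nat.factorial j : ℝ) := by
  have h1 : P.eval (x + y) = (taylor x P).eval y := by rw [taylor_eval, add_comm]
  rw [h1, Polynomial.eval_eq_sum_range' (lt_of_le_of_lt (le_of_eq (natDegree_taylor P x)) hN)]
  refine Finset.sum_congr rfl fun j _ => ?_
  rw [taylor_coeff]
  have h2 : (Nat.factorial j) • (hasseDeriv j P) = derivative^[j] P := by
    have := congrFun (Polynomial.factorial_smul_hasseDeriv (R := ℝ) j) P
    simpa using this
  have h3 : ((Nat.factorial j : ℝ)) * (hasseDeriv j P).eval x = (derivative^[j] P).eval x := by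
    rw [← h2]; simp [nsmul_eq_mul]
  have hfac : (Nat.factorial j : ℝ) ≠ 0 := Nat.cast_ne_zero.mpr (Nat.factorial_ne_zero j)
  field_simp
  linarith [congrArg (· * y ^ j) h3]


set_option maxHeartbeats 800000

/-- for an even polynomial `V` of degree `2n` (`n ≥ 2`) and `κ ∈ (0, 1/(8n))`,
there is `C > 0` with
`ε^{−3/2}·|V'(√ε·x; √ε·y)| ≤ C·ε^{1/4}·|y|·(1 + ε^{1/2+κ}·|x| + |y|)^{2n−2}`
for all `ε ∈ (0,1)` and `x, y ∈ ℝ`. -/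
theorem stmt_5 (n : ℕ) (hn : 2 ≤ n) (V : Polynomial ℝ)
    (hdeg : V.natDegree = 2 * n)
    (heven : ∀ x : ℝ, V.eval (-x) = V.eval x)
    (κ : ℝ) (hκ : κ ∈ Set.Ioo 0 (1 / (8 * (n : ℝ)))) :
    ∃ C : ℝ, 0 < C ∧ ∀ ε ∈ Set.Ioo (0:ℝ) 1, ∀ x y : ℝ,
      ε ^ (-(3:ℝ)/2) * |Vrem V (Real.sqrt ε * x) (Real.sqrt ε * y)| ≤
        C * ε ^ ((1:ℝ)/4) * |y| * (1 + ε ^ ((1:ℝ)/2 + κ) * |x| + |y|) ^ (2 * n - 2) := by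
  obtain ⟨hκ0, hκ1⟩ := hκ
  have hn0 : (0:ℝ) < n := by exact_mod_cast (by omega : 0 < n)
  set K : ℕ → ℝ := fun j =>
    (∑ i ∈ Finset.range (2*n - j), |((derivative^[j+1] V).coeff i)|) / (Nat.factorial j : ℝ)
    with hKdef
  have hKnonneg : ∀ j, 0 ≤ K j := fun j =>
    div_nonneg (Finset.sum_nonneg fun i _ => abs_nonneg _) (Nat.cast_nonneg _)
  refine ⟨1 + ∑ j ∈ Finset.Ico 4 (2*n), K j, by
    have := Finset.sum_nonneg fun j (_ : j ∈ Finset.Ico 4 (2*n)) => hKnonneg j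
    linarith, ?_⟩
  intro ε hε x y
  obtain ⟨hε0, hε1⟩ := hε
  set s := Real.sqrt ε with hsdef
  have hs0 : 0 ≤ s := Real.sqrt_nonneg ε
  have hsr : s = ε ^ ((1:ℝ)/2) := by rw [hsdef, Real.sqrt_eq_rpow]
  set T := 1 + ε ^ ((1:ℝ)/2 + κ) * |x| + |y| with hTdef
  have hxP : 0 ≤ ε ^ ((1:ℝ)/2 + κ) * |x| := by positivity
  have hyP : 0 ≤ |y| := abs_nonneg y
  have hT1 : (1:ℝ) ≤ T := by rw [hTdef]; linarith
  have hT0 : (0:ℝ) ≤ T := by linarith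
  have hTy : |y| ≤ T := by rw [hTdef]; linarith
  -- rewrite Vrem as tail sum
  have hPdeg : (derivative V).natDegree < 2*n := by
    have := Polynomial.natDegree_derivative_le V
    omega
  have hVrem : Vrem V (s*x) (s*y) =
      ∑ j ∈ Finset.Ico 4 (2*n),
        (derivative^[j+1] V).eval (s*x) * (s*y) ^ j / (Nat.factorial j : ℝ) := by
    unfold Vrem
    simp only [Function.iterate_succ_apply]
    rw [taylorExpand (derivative V) (2*n) hPdeg (s*x) (s*y),
        Finset.sum_Ico_eq_sub _ (by omega : 4 ≤ 2*n)]
  rw [hVrem]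
  have hr32 : (0:ℝ) ≤ ε ^ (-(3:ℝ)/2) := (Real.rpow_pos_of_pos hε0 _).le
  have hone : (1:ℝ) ≤ ε ^ (-κ) := by
    have := Real.rpow_le_rpow_of_exponent_ge hε0 hε1.le (neg_nonpos.mpr hκ0.le)
    simpa using this
  have key1 : 1 + s * |x| ≤ ε ^ (-κ) * T := by
    have hsplit : s * |x| = ε ^ (-κ) * (ε ^ ((1:ℝ)/2 + κ) * |x|) := by
      rw [hsr, ← mul_assoc, ← Real.rpow_add hε0]
      norm_num
    rw [hsplit, hTdef]
    nlinarith [hxP, hyP, Real.rpow_pos_of_pos hε0 (-κ)]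
  -- term-wise bound
  have termBound : ∀ j ∈ Finset.Ico 4 (2*n),
      ε ^ (-(3:ℝ)/2) *
        |(derivative^[j+1] V).eval (s*x) * (s*y) ^ j / (Nat.factorial j : ℝ)| ≤
      K j * (ε ^ ((1:ℝ)/4) * |y| * T ^ (2*n-2)) := by
    intro j hj
    obtain ⟨hj4, hj2n⟩ := Finset.mem_Ico.mp hj
    set m := 2*n - 1 - j with hmdef
    have hdegj : (derivative^[j+1] V).natDegree ≤ m := by
      have := Polynomial.natDegree_iterate_derivative V (j+1)
      omega
    set S := ∑ i ∈ Finset.range (2*n - j), |((derivative^[j+1] V).coeff i)| with hSdef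
    have hS0 : 0 ≤ S := Finset.sum_nonneg fun i _ => abs_nonneg _
    have hb : |(derivative^[j+1] V).eval (s*x)| ≤ S * (1 + s * |x|) ^ m := by
      have := evalBound (derivative^[j+1] V) m hdegj (s*x)
      rw [abs_mul, abs_of_nonneg hs0] at this
      rw [hSdef, show 2*n - j = m + 1 by omega]
      exact this
    have hA2 : |(derivative^[j+1] V).eval (s*x)| ≤ S * ((ε ^ (-κ)) ^ m * T ^ m) := by
      refine hb.trans ?_
      rw [← mul_pow]
      exact mul_le_mul_of_nonneg_left
        (pow_le_pow_left₀ (by positivity) key1 m) hS0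
    have hyj : |y| ^ j ≤ |y| * T ^ (j-1) := by
      rw [show j = (j-1) + 1 by omega, pow_succ']
      exact mul_le_mul_of_nonneg_left (pow_le_pow_left₀ hyP hTy _) hyP
    have hAbs : |(derivative^[j+1] V).eval (s*x) * (s*y) ^ j / (Nat.factorial j : ℝ)|
        = |(derivative^[j+1] V).eval (s*x)| * (s ^ j * |y| ^ j) / (Nat.factorial j : ℝ) := by
      rw [abs_div, abs_mul, abs_pow, abs_mul, abs_of_nonneg hs0, mul_pow, Nat.abs_cast]
    rw [hAbs]
    have hmain : |(derivative^[j+1] V).eval (s*x)| * (s ^ j * |y| ^ j) ≤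
        (S * ((ε ^ (-κ)) ^ m * T ^ m)) * (s ^ j * (|y| * T ^ (j-1))) := by
      refine mul_le_mul hA2 ?_ (by positivity) ?_
      · exact mul_le_mul_of_nonneg_left hyj (pow_nonneg hs0 j)
      · have : (0:ℝ) ≤ (ε ^ (-κ)) ^ m * T ^ m := by positivity
        exact mul_nonneg hS0 this
    have hfacpos : (0:ℝ) < (Nat.factorial j : ℝ) := by
      exact_mod_cast Nat.factorial_pos j
    have step1 : ε ^ (-(3:ℝ)/2) *
        (|(derivative^[j+1] V).eval (s*x)| * (s ^ j * |y| ^ j) / (Nat.factorial j : ℝ)) ≤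
        ε ^ (-(3:ℝ)/2) *
        ((S * ((ε ^ (-κ)) ^ m * T ^ m)) * (s ^ j * (|y| * T ^ (j-1))) / (Nat.factorial j : ℝ)) := by
      gcongr
    refine step1.trans ?_
    -- now pure computation + exponent comparison
    have hpowj : s ^ j = ε ^ ((1:ℝ)/2 * j) := by
      rw [hsr, ← Real.rpow_natCast (ε ^ ((1:ℝ)/2)) j, ← Real.rpow_mul hε0.le]
    have hpowm : (ε ^ (-κ)) ^ m = ε ^ (-κ * m) := by
      rw [← Real.rpow_natCast (ε ^ (-κ)) m, ← Real.rpow_mul hε0.le]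
    have hcollect : ε ^ (-(3:ℝ)/2) * (ε ^ ((1:ℝ)/2 * j) * ε ^ (-κ * m)) =
        ε ^ (-(3:ℝ)/2 + ((1:ℝ)/2 * j + -κ * m)) := by
      rw [← Real.rpow_add hε0, ← Real.rpow_add hε0]
    have hTm : T ^ m * T ^ (j-1) = T ^ (2*n-2) := by
      rw [← pow_add, show m + (j-1) = 2*n-2 by omega]
    have hexp : (1:ℝ)/4 ≤ -(3:ℝ)/2 + ((1:ℝ)/2 * j + -κ * m) := by
      have hj4' : (4:ℝ) ≤ j := by exact_mod_cast hj4
      have hm2n : (m:ℝ) ≤ 2*n := by exact_mod_cast (by omega : m ≤ 2*n)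
      have h8 : κ * (8*n) < 1 := by
        have h8n : (0:ℝ) < 8*n := by linarith
        calc κ * (8*n) < (1/(8*n)) * (8*n) := by
              exact mul_lt_mul_of_pos_right hκ1 h8n
          _ = 1 := by field_simp
      have hκm : κ * m ≤ κ * (2*n) := mul_le_mul_of_nonneg_left hm2n hκ0.le
      nlinarith
    have heps : ε ^ (-(3:ℝ)/2 + ((1:ℝ)/2 * j + -κ * m)) ≤ ε ^ ((1:ℝ)/4) :=
      Real.rpow_le_rpow_of_exponent_ge hε0 hε1.le hexp
    calc ε ^ (-(3:ℝ)/2) *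
        ((S * ((ε ^ (-κ)) ^ m * T ^ m)) * (s ^ j * (|y| * T ^ (j-1))) / (Nat.factorial j : ℝ))
        = (S / (Nat.factorial j : ℝ)) *
          (ε ^ (-(3:ℝ)/2) * (ε ^ ((1:ℝ)/2 * j) * ε ^ (-κ * m))) *
          (|y| * (T ^ m * T ^ (j-1))) := by
          rw [hpowj, hpowm]; ring
      _ = K j * ε ^ (-(3:ℝ)/2 + ((1:ℝ)/2 * j + -κ * m)) * (|y| * T ^ (2*n-2)) := by
          rw [hcollect, hTm, hKdef, hSdef]
      _ ≤ K j * ε ^ ((1:ℝ)/4) * (|y| * T ^ (2*n-2)) := by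
          have h0 : 0 ≤ |y| * T ^ (2*n-2) := by positivity
          exact mul_le_mul_of_nonneg_right
            (mul_le_mul_of_nonneg_left heps (hKnonneg j)) h0
      _ = K j * (ε ^ ((1:ℝ)/4) * |y| * T ^ (2*n-2)) := by ring
  -- sum up
  have htri := Finset.abs_sum_le_sum_abs
    (fun j => (derivative^[j+1] V).eval (s*x) * (s*y) ^ j / (Nat.factorial j : ℝ))
    (Finset.Ico 4 (2*n))
  calc ε ^ (-(3:ℝ)/2) *
      |∑ j ∈ Finset.Ico 4 (2*n),
        (derivative^[j+1] V).eval (s*x) * (s*y) ^ j / (Nat.factorial j : ℝ)|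
      ≤ ∑ j ∈ Finset.Ico 4 (2*n), ε ^ (-(3:ℝ)/2) *
        |(derivative^[j+1] V).eval (s*x) * (s*y) ^ j / (Nat.factorial j : ℝ)| := by
        rw [← Finset.mul_sum]
        exact mul_le_mul_of_nonneg_left htri hr32
    _ ≤ ∑ j ∈ Finset.Ico 4 (2*n), K j * (ε ^ ((1:ℝ)/4) * |y| * T ^ (2*n-2)) :=
        Finset.sum_le_sum termBound
    _ = (∑ j ∈ Finset.Ico 4 (2*n), K j) * (ε ^ ((1:ℝ)/4) * |y| * T ^ (2*n-2)) := by
        rw [Finset.sum_mul]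
    _ ≤ (1 + ∑ j ∈ Finset.Ico 4 (2*n), K j) * (ε ^ ((1:ℝ)/4) * |y| * T ^ (2*n-2)) := by
        have h0 : 0 ≤ ε ^ ((1:ℝ)/4) * |y| * T ^ (2*n-2) := by positivity
        nlinarith
    _ = (1 + ∑ j ∈ Finset.Ico 4 (2*n), K j) * ε ^ ((1:ℝ)/4) * |y| * T ^ (2*n-2) := by
        ring
end

section
/- Let κ ∈ (0, 1/(8n)). There exists C > 0 such that for all ε ∈ (0,1) and all x, y, ȳ ∈ ℝ: ε^{−3/2}·|V'(√ε·x; √ε·y) − V'(√ε·x; √ε·ȳ)| ≤ C·ε^{1/4}·|y − ȳ|·(1 + ε^{1/2+κ}·|x| + |y| + |ȳ|)^{2n−2}. -/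
open Real Polynomial

lemma poly_growth (P : Polynomial ℝ) (d : ℕ) (h : P.natDegree ≤ d) (u : ℝ) :
    |P.eval u| ≤ (∑ i ∈ Finset.range (d + 1), |P.coeff i|) * (1 + |u|) ^ d := by
  rw [Polynomial.eval_eq_sum_range' (Nat.lt_succ_of_le h)]
  calc |∑ i ∈ Finset.range (d + 1), P.coeff i * u ^ i|
      ≤ ∑ i ∈ Finset.range (d + 1), |P.coeff i * u ^ i| :=
        Finset.abs_sum_le_sum_abs _ _
    _ ≤ ∑ i ∈ Finset.range (d + 1), |P.coeff i| * (1 + |u|) ^ d := by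
        apply Finset.sum_le_sum
        intro i hi
        rw [abs_mul]
        apply mul_le_mul_of_nonneg_left _ (abs_nonneg _)
        calc |u ^ i| = |u| ^ i := abs_pow u i
          _ ≤ (1 + |u|) ^ i := pow_le_pow_left₀ (abs_nonneg u) (by linarith [abs_nonneg u]) i
          _ ≤ (1 + |u|) ^ d := by
              apply pow_le_pow_right₀ (by linarith [abs_nonneg u])
              have := Finset.mem_range.mp hi; omega
    _ = _ := (Finset.sum_mul _ _ _).symm

lemma pow_sub_pow_bound (y z : ℝ) (j : ℕ) :
    |y ^ j - z ^ j| ≤ (j : ℝ) * |y - z| * (1 + |y| + |z|) ^ (j - 1) := by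
  rw [← geom_sum₂_mul y z j, abs_mul]
  have h1 : |∑ i ∈ Finset.range j, y ^ i * z ^ (j - 1 - i)|
      ≤ (j : ℝ) * (1 + |y| + |z|) ^ (j - 1) := by
    calc |∑ i ∈ Finset.range j, y ^ i * z ^ (j - 1 - i)|
        ≤ ∑ i ∈ Finset.range j, |y ^ i * z ^ (j - 1 - i)| := Finset.abs_sum_le_sum_abs _ _
      _ ≤ ∑ _i ∈ Finset.range j, (1 + |y| + |z|) ^ (j - 1) := by
          apply Finset.sum_le_sum
          intro i hi
          rw [abs_mul, abs_pow, abs_pow]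
          have hij : i + (j - 1 - i) = j - 1 := by
            have := Finset.mem_range.mp hi; omega
          calc |y| ^ i * |z| ^ (j - 1 - i)
              ≤ (1 + |y| + |z|) ^ i * (1 + |y| + |z|) ^ (j - 1 - i) := by
                apply mul_le_mul
                · exact pow_le_pow_left₀ (abs_nonneg y) (by linarith [abs_nonneg z]) i
                · exact pow_le_pow_left₀ (abs_nonneg z) (by linarith [abs_nonneg y]) _
                · positivity
                · positivity
            _ = (1 + |y| + |z|) ^ (j - 1) := by rw [← pow_add, hij]
      _ = (j : ℝ) * (1 + |y| + |z|) ^ (j - 1) := by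
          rw [Finset.sum_const, Finset.card_range, nsmul_eq_mul]
  calc |∑ i ∈ Finset.range j, y ^ i * z ^ (j - 1 - i)| * |y - z|
      ≤ ((j : ℝ) * (1 + |y| + |z|) ^ (j - 1)) * |y - z| :=
        mul_le_mul_of_nonneg_right h1 (abs_nonneg _)
    _ = _ := by ring

lemma vrem_eq (V : Polynomial ℝ) (N : ℕ) (h4 : 4 ≤ N) (hN : V.natDegree ≤ N) (x y : ℝ) :
    Vrem V x y = ∑ j ∈ Finset.Ico 4 N,
      ((derivative^[j + 1] V).eval x) * y ^ j / (Nat.factorial j : ℝ) := by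
  have hterm : ∀ j : ℕ, ((Polynomial.taylor x (derivative V)).coeff j) * y ^ j
      = ((derivative^[j + 1] V).eval x) * y ^ j / (Nat.factorial j : ℝ) := by
    intro j
    have hfac : (Nat.factorial j : ℝ) ≠ 0 :=
      Nat.cast_ne_zero.mpr (Nat.factorial_ne_zero j)
    rw [Polynomial.taylor_coeff]
    have h1 : ((derivative^[j + 1] V)).eval x
        = (Nat.factorial j : ℝ) * (Polynomial.hasseDeriv j (derivative V)).eval x := by
      rw [Function.iterate_succ_apply,
        ← congrFun (Polynomial.factorial_smul_hasseDeriv (R := ℝ) j) (derivative V)]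
      simp [nsmul_eq_mul]
    rw [h1]
    field_simp
  have hdlt : (Polynomial.taylor x (derivative V)).natDegree < N := by
    rw [Polynomial.natDegree_taylor]
    have := Polynomial.natDegree_derivative_le V
    omega
  have hev : (derivative V).eval (x + y) = ∑ j ∈ Finset.range N,
      ((derivative^[j + 1] V).eval x) * y ^ j / (Nat.factorial j : ℝ) := by
    have ht := Polynomial.taylor_eval x (derivative V) y
    rw [add_comm y x] at ht
    rw [← ht, Polynomial.eval_eq_sum_range' hdlt y]
    exact Finset.sum_congr rfl fun j _ => hterm j
  unfold Vrem
  rw [hev, ← Finset.sum_Ico_eq_sub _ h4]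

set_option maxHeartbeats 2000000 in
/-- for an even polynomial `V` of degree `2n` (`n ≥ 2`) and `κ ∈ (0, 1/(8n))`,
there is `C > 0` with
`ε^{−3/2}·|V'(√ε·x; √ε·y) − V'(√ε·x; √ε·ȳ)|
  ≤ C·ε^{1/4}·|y−ȳ|·(1 + ε^{1/2+κ}·|x| + |y| + |ȳ|)^{2n−2}`
for all `ε ∈ (0,1)` and `x, y, ȳ ∈ ℝ`. -/
theorem stmt_6 (n : ℕ) (hn : 2 ≤ n) (V : Polynomial ℝ)
    (hdeg : V.natDegree = 2 * n)
    (heven : ∀ x : ℝ, V.eval (-x) = V.eval x)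
    (κ : ℝ) (hκ : κ ∈ Set.Ioo 0 (1 / (8 * (n : ℝ)))) :
    ∃ C : ℝ, 0 < C ∧ ∀ ε ∈ Set.Ioo (0:ℝ) 1, ∀ x y ybar : ℝ,
      ε ^ (-(3:ℝ)/2) *
          |Vrem V (Real.sqrt ε * x) (Real.sqrt ε * y) -
            Vrem V (Real.sqrt ε * x) (Real.sqrt ε * ybar)| ≤
        C * ε ^ ((1:ℝ)/4) * |y - ybar| *
          (1 + ε ^ ((1:ℝ)/2 + κ) * |x| + |y| + |ybar|) ^ (2 * n - 2) := by
  obtain ⟨hκ0, hκ1⟩ := hκ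
  set N := 2 * n with hNdef
  have h4N : 4 ≤ N := by omega
  have hMsum : (0:ℝ) ≤ ∑ j ∈ Finset.Ico 4 N,
      ∑ i ∈ Finset.range (N - 1 - j + 1), |((derivative^[j + 1] V).coeff i)| :=
    Finset.sum_nonneg fun j _ => Finset.sum_nonneg fun i _ => abs_nonneg _
  refine ⟨1 + ∑ j ∈ Finset.Ico 4 N,
      ∑ i ∈ Finset.range (N - 1 - j + 1), |((derivative^[j + 1] V).coeff i)|,
    by linarith, ?_⟩
  intro ε hε x y ybar
  obtain ⟨hε0, hε1⟩ := hε
  have hR0 : (0:ℝ) ≤ ε ^ ((1:ℝ)/4) * |y - ybar| *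
      (1 + ε ^ ((1:ℝ)/2 + κ) * |x| + |y| + |ybar|) ^ (N - 2) := by positivity
  rw [vrem_eq V N h4N hdeg.le, vrem_eq V N h4N hdeg.le, ← Finset.sum_sub_distrib]
  have key : ∀ j ∈ Finset.Ico 4 N,
      ε ^ (-(3:ℝ)/2) *
        |((derivative^[j + 1] V).eval (Real.sqrt ε * x)) * (Real.sqrt ε * y) ^ j /
            (Nat.factorial j : ℝ) -
          ((derivative^[j + 1] V).eval (Real.sqrt ε * x)) * (Real.sqrt ε * ybar) ^ j /
            (Nat.factorial j : ℝ)| ≤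
      (∑ i ∈ Finset.range (N - 1 - j + 1), |((derivative^[j + 1] V).coeff i)|) *
        (ε ^ ((1:ℝ)/4) * |y - ybar| *
          (1 + ε ^ ((1:ℝ)/2 + κ) * |x| + |y| + |ybar|) ^ (N - 2)) := by
    intro j hj
    obtain ⟨hj4, hjN⟩ := Finset.mem_Ico.mp hj
    set d := N - 1 - j with hd
    set P := derivative^[j + 1] V with hP
    have hPd : P.natDegree ≤ d := by
      refine (Polynomial.natDegree_iterate_derivative V (j + 1)).trans ?_
      omega
    have hj4' : (4:ℝ) ≤ (j : ℝ) := by exact_mod_cast hj4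
    have hfac : (0:ℝ) < (Nat.factorial j : ℝ) := by exact_mod_cast j.factorial_pos
    have hdiff : P.eval (Real.sqrt ε * x) * (Real.sqrt ε * y) ^ j / (Nat.factorial j : ℝ) -
        P.eval (Real.sqrt ε * x) * (Real.sqrt ε * ybar) ^ j / (Nat.factorial j : ℝ)
        = P.eval (Real.sqrt ε * x) * ((Real.sqrt ε) ^ j * (y ^ j - ybar ^ j)) /
            (Nat.factorial j : ℝ) := by
      rw [mul_pow, mul_pow]; ring
    rw [hdiff, abs_div, abs_mul, abs_mul, abs_pow,
      abs_of_nonneg (Real.sqrt_nonneg ε), abs_of_pos hfac]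
    -- basic power facts
    have hεκ1 : (1:ℝ) ≤ ε ^ (-κ) := by
      have h := Real.rpow_le_rpow_of_exponent_ge hε0 hε1.le
        (show -κ ≤ (0:ℝ) by linarith)
      rwa [Real.rpow_zero] at h
    have hhalf : ε ^ (-κ) * ε ^ ((1:ℝ)/2 + κ) = Real.sqrt ε := by
      rw [← Real.rpow_add hε0, Real.sqrt_eq_rpow]
      norm_num
    have hS1 : 1 + Real.sqrt ε * |x| ≤
        ε ^ (-κ) * (1 + ε ^ ((1:ℝ)/2 + κ) * |x| + |y| + |ybar|) := by
      have h1 : ε ^ (-κ) * (ε ^ ((1:ℝ)/2 + κ) * |x|) = Real.sqrt ε * |x| := by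
        rw [← mul_assoc, hhalf]
      have h2 : (0:ℝ) ≤ ε ^ (-κ) * |y| :=
        mul_nonneg (Real.rpow_nonneg hε0.le _) (abs_nonneg _)
      have h3 : (0:ℝ) ≤ ε ^ (-κ) * |ybar| :=
        mul_nonneg (Real.rpow_nonneg hε0.le _) (abs_nonneg _)
      nlinarith [h1, h2, h3, hεκ1]
    have hxu : |Real.sqrt ε * x| = Real.sqrt ε * |x| := by
      rw [abs_mul, abs_of_nonneg (Real.sqrt_nonneg ε)]
    have hA1 : |P.eval (Real.sqrt ε * x)| ≤
        (∑ i ∈ Finset.range (d + 1), |P.coeff i|) * (1 + |Real.sqrt ε * x|) ^ d :=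
      poly_growth P d hPd _
    have hA4 : (1 + |Real.sqrt ε * x|) ^ d ≤
        ε ^ (-κ * (d : ℝ)) * (1 + ε ^ ((1:ℝ)/2 + κ) * |x| + |y| + |ybar|) ^ d := by
      calc (1 + |Real.sqrt ε * x|) ^ d
          ≤ (ε ^ (-κ) * (1 + ε ^ ((1:ℝ)/2 + κ) * |x| + |y| + |ybar|)) ^ d := by
            apply pow_le_pow_left₀ (by positivity)
            rw [hxu]; exact hS1
        _ = (ε ^ (-κ)) ^ d * (1 + ε ^ ((1:ℝ)/2 + κ) * |x| + |y| + |ybar|) ^ d :=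
            mul_pow _ _ d
        _ = ε ^ (-κ * (d : ℝ)) * (1 + ε ^ ((1:ℝ)/2 + κ) * |x| + |y| + |ybar|) ^ d := by
            rw [← Real.rpow_natCast (ε ^ (-κ)) d, ← Real.rpow_mul hε0.le]
    have hA5 : |y ^ j - ybar ^ j| ≤ (j : ℝ) * |y - ybar| *
        (1 + ε ^ ((1:ℝ)/2 + κ) * |x| + |y| + |ybar|) ^ (j - 1) := by
      calc |y ^ j - ybar ^ j| ≤ (j : ℝ) * |y - ybar| * (1 + |y| + |ybar|) ^ (j - 1) :=
            pow_sub_pow_bound y ybar j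
        _ ≤ (j : ℝ) * |y - ybar| *
            (1 + ε ^ ((1:ℝ)/2 + κ) * |x| + |y| + |ybar|) ^ (j - 1) := by
            apply mul_le_mul_of_nonneg_left _ (by positivity)
            apply pow_le_pow_left₀ (by positivity)
            have : (0:ℝ) ≤ ε ^ ((1:ℝ)/2 + κ) * |x| := by positivity
            linarith
    have hsqj : (Real.sqrt ε) ^ j = ε ^ ((1:ℝ)/2 * (j : ℝ)) := by
      rw [Real.sqrt_eq_rpow, ← Real.rpow_natCast (ε ^ ((1:ℝ)/2)) j,
        ← Real.rpow_mul hε0.le]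
    have hE : ε ^ (-(3:ℝ)/2) * ε ^ (-κ * (d : ℝ)) * ε ^ ((1:ℝ)/2 * (j : ℝ))
        = ε ^ (-(3:ℝ)/2 + -κ * (d : ℝ) + (1:ℝ)/2 * (j : ℝ)) := by
      rw [← Real.rpow_add hε0, ← Real.rpow_add hε0]
    have hde : d + (j - 1) = N - 2 := by omega
    have hκd : κ * (d : ℝ) < 1/4 := by
      have hn8 : (0:ℝ) < 8 * (n : ℝ) := by
        have : (0:ℝ) < (n : ℝ) := by exact_mod_cast (by omega : 0 < n)
        linarith
      have h8 : κ * (8 * (n : ℝ)) < 1 := by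
        have := (lt_div_iff₀ hn8).mp hκ1
        linarith
      have hdle : (d : ℝ) ≤ 2 * (n : ℝ) := by exact_mod_cast (by omega : d ≤ 2 * n)
      nlinarith [mul_le_mul_of_nonneg_left hdle hκ0.le]
    have hexp : (1:ℝ)/4 ≤ -(3:ℝ)/2 + -κ * (d : ℝ) + (1:ℝ)/2 * (j : ℝ) := by
      nlinarith [hκd, hj4']
    have hjfac : (j : ℝ) / (Nat.factorial j : ℝ) ≤ 1 := by
      apply div_le_one_of_le₀ _ hfac.le
      exact_mod_cast Nat.self_le_factorial j
    calc ε ^ (-(3:ℝ)/2) *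
          (|P.eval (Real.sqrt ε * x)| * ((Real.sqrt ε) ^ j * |y ^ j - ybar ^ j|) /
            (Nat.factorial j : ℝ))
        ≤ ε ^ (-(3:ℝ)/2) *
          (((∑ i ∈ Finset.range (d + 1), |P.coeff i|) *
              (ε ^ (-κ * (d : ℝ)) *
                (1 + ε ^ ((1:ℝ)/2 + κ) * |x| + |y| + |ybar|) ^ d)) *
            ((Real.sqrt ε) ^ j * ((j : ℝ) * |y - ybar| *
              (1 + ε ^ ((1:ℝ)/2 + κ) * |x| + |y| + |ybar|) ^ (j - 1))) /
            (Nat.factorial j : ℝ)) := by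
          have hA14 : |P.eval (Real.sqrt ε * x)| ≤
              (∑ i ∈ Finset.range (d + 1), |P.coeff i|) *
                (ε ^ (-κ * (d : ℝ)) *
                  (1 + ε ^ ((1:ℝ)/2 + κ) * |x| + |y| + |ybar|) ^ d) :=
            hA1.trans (mul_le_mul_of_nonneg_left hA4
              (Finset.sum_nonneg fun i _ => abs_nonneg _))
          clear hA1 hA4
          gcongr
      _ = ((∑ i ∈ Finset.range (d + 1), |P.coeff i|) *
            ((j : ℝ) / (Nat.factorial j : ℝ))) *
          (ε ^ (-(3:ℝ)/2) * ε ^ (-κ * (d : ℝ)) * ε ^ ((1:ℝ)/2 * (j : ℝ))) *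
          |y - ybar| *
          ((1 + ε ^ ((1:ℝ)/2 + κ) * |x| + |y| + |ybar|) ^ d *
            (1 + ε ^ ((1:ℝ)/2 + κ) * |x| + |y| + |ybar|) ^ (j - 1)) := by
          rw [hsqj]; ring
      _ = ((∑ i ∈ Finset.range (d + 1), |P.coeff i|) *
            ((j : ℝ) / (Nat.factorial j : ℝ))) *
          ε ^ (-(3:ℝ)/2 + -κ * (d : ℝ) + (1:ℝ)/2 * (j : ℝ)) *
          |y - ybar| *
          (1 + ε ^ ((1:ℝ)/2 + κ) * |x| + |y| + |ybar|) ^ (N - 2) := by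
          rw [hE, ← pow_add, hde]
      _ ≤ ((∑ i ∈ Finset.range (d + 1), |P.coeff i|) * 1) *
          ε ^ ((1:ℝ)/4) * |y - ybar| *
          (1 + ε ^ ((1:ℝ)/2 + κ) * |x| + |y| + |ybar|) ^ (N - 2) := by
          have hmono : ε ^ (-(3:ℝ)/2 + -κ * (d : ℝ) + (1:ℝ)/2 * (j : ℝ)) ≤
              ε ^ ((1:ℝ)/4) :=
            Real.rpow_le_rpow_of_exponent_ge hε0 hε1.le hexp
          gcongr ?_ * ?_ * _ * _
          · exact mul_le_mul_of_nonneg_left hjfac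
              (Finset.sum_nonneg fun i _ => abs_nonneg _)
      _ = (∑ i ∈ Finset.range (d + 1), |P.coeff i|) *
          (ε ^ ((1:ℝ)/4) * |y - ybar| *
            (1 + ε ^ ((1:ℝ)/2 + κ) * |x| + |y| + |ybar|) ^ (N - 2)) := by ring
  calc ε ^ (-(3:ℝ)/2) *
        |∑ j ∈ Finset.Ico 4 N,
          (((derivative^[j + 1] V).eval (Real.sqrt ε * x)) * (Real.sqrt ε * y) ^ j /
              (Nat.factorial j : ℝ) -
            ((derivative^[j + 1] V).eval (Real.sqrt ε * x)) * (Real.sqrt ε * ybar) ^ j /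
              (Nat.factorial j : ℝ))|
      ≤ ε ^ (-(3:ℝ)/2) * ∑ j ∈ Finset.Ico 4 N,
          |((derivative^[j + 1] V).eval (Real.sqrt ε * x)) * (Real.sqrt ε * y) ^ j /
              (Nat.factorial j : ℝ) -
            ((derivative^[j + 1] V).eval (Real.sqrt ε * x)) * (Real.sqrt ε * ybar) ^ j /
              (Nat.factorial j : ℝ)| :=
        mul_le_mul_of_nonneg_left (Finset.abs_sum_le_sum_abs _ _)
          (Real.rpow_nonneg hε0.le _)
    _ = ∑ j ∈ Finset.Ico 4 N, ε ^ (-(3:ℝ)/2) *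
          |((derivative^[j + 1] V).eval (Real.sqrt ε * x)) * (Real.sqrt ε * y) ^ j /
              (Nat.factorial j : ℝ) -
            ((derivative^[j + 1] V).eval (Real.sqrt ε * x)) * (Real.sqrt ε * ybar) ^ j /
              (Nat.factorial j : ℝ)| := Finset.mul_sum _ _ _
    _ ≤ ∑ j ∈ Finset.Ico 4 N,
          (∑ i ∈ Finset.range (N - 1 - j + 1), |((derivative^[j + 1] V).coeff i)|) *
            (ε ^ ((1:ℝ)/4) * |y - ybar| *
              (1 + ε ^ ((1:ℝ)/2 + κ) * |x| + |y| + |ybar|) ^ (N - 2)) :=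
        Finset.sum_le_sum key
    _ = (∑ j ∈ Finset.Ico 4 N,
          ∑ i ∈ Finset.range (N - 1 - j + 1), |((derivative^[j + 1] V).coeff i)|) *
          (ε ^ ((1:ℝ)/4) * |y - ybar| *
            (1 + ε ^ ((1:ℝ)/2 + κ) * |x| + |y| + |ybar|) ^ (N - 2)) := by
        rw [Finset.sum_mul]
    _ ≤ (1 + ∑ j ∈ Finset.Ico 4 N,
          ∑ i ∈ Finset.range (N - 1 - j + 1), |((derivative^[j + 1] V).coeff i)|) *
          (ε ^ ((1:ℝ)/4) * |y - ybar| *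
            (1 + ε ^ ((1:ℝ)/2 + κ) * |x| + |y| + |ybar|) ^ (N - 2)) :=
        mul_le_mul_of_nonneg_right (by linarith) hR0
    _ = _ := by ring
end
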